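/- Let n ≥ 3 be an integer. Then ∫_{ℝⁿ} |∇U₁(x)|² dx = (1/(2^{2/n} S)) ∫_{ℝⁿ} U₁(x)^{2*} dx, and the Sobolev quotient of U₁ equals the sharp constant: ∫_{ℝⁿ} |∇U₁|² dx = (1/S) (∫_{ℝⁿ} U₁^{2*} dx)^{2/2*}. -/

import Mathlib

/-!
With `c = bubbleC n` we have `U₁ = (1 + c|x|²)^{-(n-2)/2}`, so `U₁^{2*} = (1 + c|x|²)^{-n}` and
`|∇U₁|² = (n-2)² c² |x|² (1 + c|x|²)^{-n}`. In polar coordinates, followed by the substitution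
`u = c r²`, both integrals become Beta integrals `∫₀^∞ u^{a-1} (1+u)^{-n} du = B(a, n-a)`, with
`a = n/2` and `a = n/2 + 1` respectively. Their ratio gives `∫|∇U₁|² = n(n-2) c ∫U₁^{2*}`, and the
value of `c` is exactly the one making `∫U₁^{2*} = 2`, which turns the first identity into the
second.
-/

open MeasureTheory Real

/-- The sharp constant `S = (π n(n−2))⁻¹ (Γ(n)/Γ(n/2))^{2/n}` in the Sobolev
inequality on `ℝⁿ`. -/
noncomputable def sobolevS (n : ℕ) : ℝ :=
  (π * n * ((n : ℝ) - 2))⁻¹ * (Real.Gamma n / Real.Gamma ((n : ℝ) / 2)) ^ ((2 : ℝ) / n)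

/-- The constant `c(n) = 1/(2^{2/n}(n−2) n S)`. -/
noncomputable def bubbleC (n : ℕ) : ℝ :=
  1 / (2 ^ ((2 : ℝ) / n) * ((n : ℝ) - 2) * n * sobolevS n)

/-- The bubble `U_{x₀,λ}(x) = (λ/(λ² + c(n)|x−x₀|²))^{(n−2)/2}`. -/
noncomputable def bubble (n : ℕ) (x₀ : EuclideanSpace ℝ (Fin n)) (lam : ℝ)
    (x : EuclideanSpace ℝ (Fin n)) : ℝ :=
  (lam / (lam ^ 2 + bubbleC n * ‖x - x₀‖ ^ 2)) ^ (((n : ℝ) - 2) / 2)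

open Set Module

theorem integral_Ioo_rpow_mul_one_sub_rpow {a b : ℝ} (ha : 0 < a) (hb : 0 < b) :
    ∫ x in Ioo (0 : ℝ) 1, x ^ (a - 1) * (1 - x) ^ (b - 1) = Gamma a * Gamma b / Gamma (a + b) := by
  have h := Complex.betaIntegral_eq_Gamma_mul_div a b (by simpa) (by simpa)
  rw [← Complex.ofReal_add, Complex.Gamma_ofReal, Complex.Gamma_ofReal, Complex.Gamma_ofReal,
    Complex.betaIntegral, intervalIntegral.integral_of_le zero_le_one,
    integral_Ioc_eq_integral_Ioo] at h
  rw [← Complex.ofReal_inj, ← integral_complex_ofReal, Complex.ofReal_div, Complex.ofReal_mul, ← h]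
  refine setIntegral_congr_fun measurableSet_Ioo fun x hx => ?_
  rw [Complex.ofReal_mul, Complex.ofReal_cpow hx.1.le, Complex.ofReal_cpow (by linarith [hx.2])]
  push_cast
  rfl

lemma hasDerivAt_div_one_add {u : ℝ} (hu : 1 + u ≠ 0) :
    HasDerivAt (fun v : ℝ => v / (1 + v)) ((1 + u) ^ 2)⁻¹ u := by
  have h := (hasDerivAt_id' u).div ((hasDerivAt_id' u).const_add 1) hu
  rwa [show (1 * (1 + u) - u * 1) / (1 + u) ^ 2 = ((1 + u) ^ 2)⁻¹ by ring] at h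

lemma image_div_one_add_Ioi : (fun u : ℝ => u / (1 + u)) '' Ioi 0 = Ioo 0 1 := by
  ext x
  refine ⟨?_, fun hx => ⟨x / (1 - x), div_pos hx.1 (sub_pos.2 hx.2), ?_⟩⟩
  · rintro ⟨u, hu : 0 < u, rfl⟩
    exact ⟨by positivity, (div_lt_one (by positivity)).2 (by linarith)⟩
  · have : 1 - x ≠ 0 := (sub_pos.2 hx.2).ne'
    field_simp
    ring

theorem integral_Ioi_rpow_mul_one_add_rpow_neg {a b : ℝ} (ha : 0 < a) (hb : 0 < b) :
    ∫ u in Ioi (0 : ℝ), u ^ (a - 1) * (1 + u) ^ (-(a + b)) =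
      Gamma a * Gamma b / Gamma (a + b) := by
  have hinj : InjOn (fun u : ℝ => u / (1 + u)) (Ioi 0) := by
    intro u (hu : 0 < u) v (hv : 0 < v) huv
    field_simp at huv
    linarith
  rw [← integral_Ioo_rpow_mul_one_sub_rpow ha hb, ← image_div_one_add_Ioi,
    integral_image_eq_integral_abs_deriv_smul measurableSet_Ioi
      (fun u (hu : 0 < u) => (hasDerivAt_div_one_add (by positivity)).hasDerivWithinAt) hinj]
  refine setIntegral_congr_fun measurableSet_Ioi fun u (hu : 0 < u) => ?_
  have h1 : 0 < 1 + u := by positivity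
  have hsub : 1 - u / (1 + u) = (1 + u)⁻¹ := by field_simp; ring
  rw [smul_eq_mul, hsub, abs_of_pos (by positivity), div_rpow hu.le h1.le, inv_rpow h1.le,
    ← rpow_neg h1.le, div_eq_mul_inv, ← rpow_neg h1.le, ← rpow_natCast, ← rpow_neg h1.le,
    show -(a + b) = -((2 : ℕ) : ℝ) + -(a - 1) + -(b - 1) by push_cast; ring,
    rpow_add h1, rpow_add h1]
  ring

theorem integral_Ioi_rpow_mul_one_add_mul_rpow_neg {a m c : ℝ} (ha : 0 < a) (ham : a < m)
    (hc : 0 < c) :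
    ∫ u in Ioi (0 : ℝ), u ^ (a - 1) * (1 + c * u) ^ (-m) =
      c ^ (-a) * (Gamma a * Gamma (m - a) / Gamma m) := by
  have h := integral_comp_mul_left_Ioi (fun v => v ^ (a - 1) * (1 + v) ^ (-m)) 0 hc
  have hB := integral_Ioi_rpow_mul_one_add_rpow_neg ha (sub_pos.2 ham)
  rw [add_sub_cancel] at hB
  rw [mul_zero, hB, smul_eq_mul] at h
  calc ∫ u in Ioi (0 : ℝ), u ^ (a - 1) * (1 + c * u) ^ (-m)
      = c ^ (1 - a) * ∫ u in Ioi (0 : ℝ), (c * u) ^ (a - 1) * (1 + c * u) ^ (-m) := by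
        rw [← integral_const_mul]
        refine setIntegral_congr_fun measurableSet_Ioi fun u (hu : 0 < u) => ?_
        rw [mul_rpow hc.le hu.le, ← mul_assoc, ← mul_assoc, ← rpow_add hc]
        simp
    _ = c ^ (-a) * (Gamma a * Gamma (m - a) / Gamma m) := by
        rw [h, ← mul_assoc, ← rpow_neg_one, ← rpow_add hc]
        ring_nf

theorem integral_Ioi_rpow_mul_one_add_mul_sq_rpow_neg {a m c : ℝ} (ha : 0 < a) (ham : a < m)
    (hc : 0 < c) :
    ∫ r in Ioi (0 : ℝ), r ^ (2 * a - 1) * (1 + c * r ^ 2) ^ (-m) =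
      c ^ (-a) / 2 * (Gamma a * Gamma (m - a) / Gamma m) := by
  have h := integral_comp_rpow_Ioi (fun u => u ^ (a - 1) * (1 + c * u) ^ (-m)) two_ne_zero
  rw [integral_Ioi_rpow_mul_one_add_mul_rpow_neg ha ham hc] at h
  rw [div_mul_eq_mul_div, ← h, eq_div_iff two_ne_zero, ← integral_mul_const]
  refine setIntegral_congr_fun measurableSet_Ioi fun r (hr : 0 < r) => ?_
  rw [smul_eq_mul, abs_two, ← rpow_mul hr.le, rpow_two, show (2 : ℝ) - 1 = 1 by norm_num,
    rpow_one, show 2 * a - 1 = 2 * (a - 1) + 1 by ring, rpow_add_one hr.ne']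
  ring

section Radial

variable {E : Type*} [NormedAddCommGroup E] [InnerProductSpace ℝ E] [FiniteDimensional ℝ E]
  [MeasurableSpace E] [BorelSpace E] [Nontrivial E]

theorem measureReal_ball_zero_one :
    volume.real (Metric.ball (0 : E) 1) =
      π ^ ((finrank ℝ E : ℝ) / 2) / Gamma (finrank ℝ E / 2 + 1) := by
  rw [measureReal_def, InnerProductSpace.volume_ball, ENNReal.ofReal_one, one_pow, one_mul,
    ENNReal.toReal_ofReal (by positivity), sqrt_eq_rpow, ← rpow_natCast, ← rpow_mul pi_pos.le]
  ring_nf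

theorem integral_norm_pow_mul_one_add_mul_norm_sq_rpow_neg (j : ℕ) {c m : ℝ} (hc : 0 < c)
    (hm : (finrank ℝ E : ℝ) / 2 + j < m) :
    ∫ x : E, ‖x‖ ^ (2 * j) * (1 + c * ‖x‖ ^ 2) ^ (-m) =
      π ^ ((finrank ℝ E : ℝ) / 2) * c ^ (-((finrank ℝ E : ℝ) / 2 + j)) *
        (Gamma ((finrank ℝ E : ℝ) / 2 + j) * Gamma (m - ((finrank ℝ E : ℝ) / 2 + j))) /
        (Gamma ((finrank ℝ E : ℝ) / 2) * Gamma m) := by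
  set d := finrank ℝ E with hd
  have hd1 : 1 ≤ d := finrank_pos
  have hdR : (0 : ℝ) < d := by exact_mod_cast hd1
  have hpow : ∀ r ∈ Ioi (0 : ℝ), r ^ (d - 1) • (r ^ (2 * j) * (1 + c * r ^ 2) ^ (-m)) =
      r ^ (2 * ((d : ℝ) / 2 + j) - 1) * (1 + c * r ^ 2) ^ (-m) := by
    intro r (hr : 0 < r)
    rw [smul_eq_mul, ← mul_assoc, ← pow_add, ← rpow_natCast]
    congr 2
    push_cast [Nat.cast_sub hd1]
    ring
  rw [integral_fun_norm_addHaar volume (fun r => r ^ (2 * j) * (1 + c * r ^ 2) ^ (-m)),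
    setIntegral_congr_fun measurableSet_Ioi hpow,
    integral_Ioi_rpow_mul_one_add_mul_sq_rpow_neg (by positivity) hm hc, measureReal_ball_zero_one,
    Gamma_add_one (by positivity), nsmul_eq_mul, smul_eq_mul]
  rw [← hd]
  have := Gamma_pos_of_pos (half_pos hdR)
  have := Gamma_pos_of_pos (by linarith : 0 < m)
  field_simp

end Radial

theorem norm_gradient_comp_norm_sq {E : Type*} [NormedAddCommGroup E] [InnerProductSpace ℝ E]
    [CompleteSpace E] {φ : ℝ → ℝ} {φ' : ℝ} {x : E} (hφ : HasDerivAt φ φ' (‖x‖ ^ 2)) :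
    ‖gradient (fun y => φ (‖y‖ ^ 2)) x‖ = 2 * |φ'| * ‖x‖ := by
  have h : HasFDerivAt (fun y : E => φ (‖y‖ ^ 2)) (φ' • (2 • innerSL ℝ x)) x :=
    hφ.comp_hasFDerivAt x (hasFDerivAt_id x).norm_sq
  rw [gradient, h.fderiv, LinearIsometryEquiv.norm_map, norm_smul, RCLike.norm_nsmul ℝ,
    innerSL_apply_norm, Real.norm_eq_abs, nsmul_eq_mul]
  push_cast
  ring

section Bubble

variable {n : ℕ}

lemma sobolevS_pos (hn : 2 < n) : 0 < sobolevS n := by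
  have : (2 : ℝ) < n := by exact_mod_cast hn
  have := Gamma_pos_of_pos (by positivity : (0 : ℝ) < n)
  have := Gamma_pos_of_pos (by positivity : (0 : ℝ) < n / 2)
  exact mul_pos (inv_pos.2 (mul_pos (by positivity) (by linarith))) (by positivity)

lemma bubbleC_pos (hn : 2 < n) : 0 < bubbleC n := by
  have : (0 : ℝ) < n - 2 := by rw [sub_pos]; exact_mod_cast hn
  have := sobolevS_pos hn
  unfold bubbleC
  positivity

lemma mul_bubbleC (hn : 2 < n) :
    n * ((n : ℝ) - 2) * bubbleC n = 1 / (2 ^ ((2 : ℝ) / n) * sobolevS n) := by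
  have : (n : ℝ) - 2 ≠ 0 := by rw [sub_ne_zero]; exact_mod_cast hn.ne'
  have : (n : ℝ) ≠ 0 := by positivity
  unfold bubbleC
  field_simp

lemma bubbleC_rpow_neg_half (hn : 2 < n) :
    bubbleC n ^ (-((n : ℝ) / 2)) = 2 * Gamma n / (π ^ ((n : ℝ) / 2) * Gamma (n / 2)) := by
  have hn0 : (0 : ℝ) < n := by positivity
  have hn2 : (n : ℝ) - 2 ≠ 0 := by rw [sub_ne_zero]; exact_mod_cast hn.ne'
  have hΓn := Gamma_pos_of_pos hn0
  have hΓ2 := Gamma_pos_of_pos (half_pos hn0)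
  have hinv :
      (bubbleC n)⁻¹ = (2 * Gamma n / (π ^ ((n : ℝ) / 2) * Gamma (n / 2))) ^ ((2 : ℝ) / n) := by
    rw [div_rpow (by positivity) (by positivity), mul_rpow (by positivity) (by positivity),
      mul_rpow (by positivity) (by positivity), ← rpow_mul pi_pos.le,
      show (n : ℝ) / 2 * (2 / n) = 1 by field_simp, rpow_one, bubbleC, sobolevS,
      div_rpow hΓn.le hΓ2.le]
    field_simp
  rw [rpow_neg (bubbleC_pos hn).le, ← inv_rpow (bubbleC_pos hn).le, hinv,
    ← rpow_mul (by positivity), show (2 : ℝ) / n * (n / 2) = 1 by field_simp, rpow_one]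

lemma bubble_zero_one_eq (hn : 2 < n) :
    bubble n 0 1 = fun x => (1 + bubbleC n * ‖x‖ ^ 2) ^ (-(((n : ℝ) - 2) / 2)) := by
  funext x
  have := bubbleC_pos hn
  rw [bubble, sub_zero, one_pow, one_div, inv_rpow (by positivity), ← rpow_neg (by positivity)]

lemma bubble_rpow_critical (hn : 2 < n) (x : EuclideanSpace ℝ (Fin n)) :
    bubble n 0 1 x ^ (2 * (n : ℝ) / ((n : ℝ) - 2)) = (1 + bubbleC n * ‖x‖ ^ 2) ^ (-(n : ℝ)) := by
  have hn2 : (n : ℝ) - 2 ≠ 0 := by rw [sub_ne_zero]; exact_mod_cast hn.ne'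
  have := bubbleC_pos hn
  rw [bubble_zero_one_eq hn, ← rpow_mul (by positivity)]
  congr 1
  field_simp

lemma norm_gradient_bubble_sq (hn : 2 < n) (x : EuclideanSpace ℝ (Fin n)) :
    ‖gradient (bubble n 0 1) x‖ ^ 2 =
      (((n : ℝ) - 2) * bubbleC n) ^ 2 * (‖x‖ ^ 2 * (1 + bubbleC n * ‖x‖ ^ 2) ^ (-(n : ℝ))) := by
  set c := bubbleC n
  set q := -(((n : ℝ) - 2) / 2) with hq
  have hpos : 0 < 1 + c * ‖x‖ ^ 2 := by have := bubbleC_pos hn; positivity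
  have hφ : HasDerivAt (fun t => (1 + c * t) ^ q) (c * q * (1 + c * ‖x‖ ^ 2) ^ (q - 1))
      (‖x‖ ^ 2) := by
    simpa using (((hasDerivAt_id' (‖x‖ ^ 2)).const_mul c).const_add 1).rpow_const (p := q)
      (Or.inl hpos.ne')
  rw [bubble_zero_one_eq hn, norm_gradient_comp_norm_sq hφ, mul_pow, mul_pow, sq_abs, mul_pow,
    mul_pow, ← rpow_natCast ((1 + c * ‖x‖ ^ 2) ^ (q - 1)), ← rpow_mul hpos.le]
  rw [show (q - 1) * ((2 : ℕ) : ℝ) = -(n : ℝ) by push_cast; ring, hq]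
  ring

lemma integral_bubble_rpow_critical (hn : 2 < n) :
    ∫ x, bubble n 0 1 x ^ (2 * (n : ℝ) / ((n : ℝ) - 2)) = 2 := by
  have : NeZero n := ⟨by omega⟩
  have hn0 : (0 : ℝ) < n := by positivity
  have h := integral_norm_pow_mul_one_add_mul_norm_sq_rpow_neg (E := EuclideanSpace ℝ (Fin n)) 0
    (bubbleC_pos hn) (m := n) (by simp [hn0])
  simp only [finrank_euclideanSpace_fin, mul_zero, pow_zero, one_mul, CharP.cast_eq_zero, add_zero,
    show (n : ℝ) - n / 2 = n / 2 by ring] at h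
  simp_rw [bubble_rpow_critical hn, h, bubbleC_rpow_neg_half hn]
  have := Gamma_pos_of_pos hn0
  have := Gamma_pos_of_pos (half_pos hn0)
  field_simp

lemma integral_norm_gradient_bubble_sq (hn : 2 < n) :
    ∫ x, ‖gradient (bubble n 0 1) x‖ ^ 2 = 2 * (n * ((n : ℝ) - 2) * bubbleC n) := by
  have : NeZero n := ⟨by omega⟩
  have hn0 : (0 : ℝ) < n := by positivity
  have hn2 : (0 : ℝ) < n / 2 - 1 := by
    have : (2 : ℝ) < n := by exact_mod_cast hn
    linarith
  have hc := bubbleC_pos hn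
  have h := integral_norm_pow_mul_one_add_mul_norm_sq_rpow_neg (E := EuclideanSpace ℝ (Fin n)) 1
    hc (m := n) (by simp; linarith)
  simp only [finrank_euclideanSpace_fin, Nat.cast_one, mul_one,
    show (n : ℝ) - (n / 2 + 1) = n / 2 - 1 by ring] at h
  simp_rw [norm_gradient_bubble_sq hn]
  have hΓ : Gamma (n / 2) = (n / 2 - 1) * Gamma (n / 2 - 1) := by
    simpa using Gamma_add_one hn2.ne'
  rw [integral_const_mul, h, Gamma_add_one (by positivity), neg_add, rpow_add hc,
    bubbleC_rpow_neg_half hn, rpow_neg_one, hΓ]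
  have := Gamma_pos_of_pos hn0
  have := (Gamma_pos_of_pos hn2).ne'
  -- otherwise `field_simp` rewrites `n / 2 - 1` to `(n - 2) / 2` and no longer sees `Γ(n/2 - 1) ≠ 0`
  generalize Gamma ((n : ℝ) / 2 - 1) = G at *
  field_simp

end Bubble

/-- on all of `ℝⁿ`, the bubble `U₁` satisfies
`∫ |∇U₁|² = (1/(2^{2/n}S)) ∫ U₁^{2*}` and its Sobolev quotient equals the
sharp constant: `∫ |∇U₁|² = (1/S)(∫ U₁^{2*})^{2/2*}`. -/
theorem bubble_quotient (n : ℕ) (hn : 3 ≤ n) :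
    (∫ x, ‖gradient (bubble n 0 1) x‖ ^ 2 =
      (1 / (2 ^ ((2 : ℝ) / n) * sobolevS n)) *
        ∫ x, bubble n 0 1 x ^ (2 * (n : ℝ) / ((n : ℝ) - 2))) ∧
    ∫ x, ‖gradient (bubble n 0 1) x‖ ^ 2 =
      (1 / sobolevS n) *
        (∫ x, bubble n 0 1 x ^ (2 * (n : ℝ) / ((n : ℝ) - 2))) ^ (((n : ℝ) - 2) / n) := by
  have hn2 : 2 < n := hn
  rw [integral_norm_gradient_bubble_sq hn2, integral_bubble_rpow_critical hn2, mul_bubbleC hn2]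
  refine ⟨mul_comm _ _, ?_⟩
  have hn0 : (n : ℝ) ≠ 0 := by positivity
  rw [show ((n : ℝ) - 2) / n = 1 - 2 / n by field_simp, rpow_sub two_pos, rpow_one]
  have := sobolevS_pos hn2
  field_simp
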